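/- Let A be a closed subalgebra of C(X) separating points and containing constants, with A ≠ C(X). Then the restriction of A to its Šilov boundary is not all of C(Sh(A)). -/

import Mathlib

/-!
If `A↾S = C(S)` and the restriction map is injective (as it is on a boundary), then `A ≅ C(S)`,
so every character of `A`, in particular evaluation at a point `p ∈ X`, is evaluation at some
`q ∈ S`. Then `f p = f q` for all `f ∈ A`, so `p = q ∈ S` because `A` separates points. Hence
`S = X`, and `A = A↾X = C(X)`.
-/

open Set

/-- `H` is a (closed) boundary for `A`: `‖f‖_H = ‖f‖` for all `f ∈ A`. -/
noncomputable def IsBoundary {X : Type*} [TopologicalSpace X] [CompactSpace X]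
    (A : Subalgebra ℂ C(X, ℂ)) (H : Set X) : Prop :=
  IsClosed H ∧ ∀ f ∈ A, sSup ((fun x => ‖f x‖) '' H) = ‖f‖

/-- The restriction algebra `A↾S`. -/
def restrictSet {X : Type*} [TopologicalSpace X] (A : Subalgebra ℂ C(X, ℂ)) (S : Set X) :
    Set C(S, ℂ) :=
  {g | ∃ f ∈ A, f.restrict S = g}

namespace Subalgebra

variable {X : Type*} [TopologicalSpace X] (A : Subalgebra ℂ C(X, ℂ)) (S : Set X)

noncomputable def restrictAlgHom : A →ₐ[ℂ] C(S, ℂ) :=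
  (ContinuousMap.compRightAlgHom ℂ ℂ ⟨Subtype.val, continuous_subtype_val⟩).comp A.val

@[simp]
theorem restrictAlgHom_apply (f : A) : A.restrictAlgHom S f = (f : C(X, ℂ)).restrict S :=
  rfl

theorem range_restrictAlgHom : range (A.restrictAlgHom S) = restrictSet A S := by
  ext g
  simp [restrictSet]

variable {A S}

theorem exists_mem_eval_eq_of_bijective_restrictAlgHom [CompactSpace S] [T2Space S]
    (hρ : Function.Bijective (A.restrictAlgHom S)) (p : X) :
    ∃ q ∈ S, ∀ f ∈ A, f q = f p := by
  let e : A ≃ₐ[ℂ] C(S, ℂ) := AlgEquiv.ofBijective _ hρ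
  let φ : C(S, ℂ) →ₐ[ℂ] ℂ := ((ContinuousMap.evalAlgHom ℂ ℂ p).comp A.val).comp e.symm.toAlgHom
  obtain ⟨q, hq⟩ := (WeakDual.CharacterSpace.continuousMapEval_bijective S ℂ).surjective
    (WeakDual.CharacterSpace.equivAlgHom.symm φ)
  refine ⟨q, q.2, fun f hf => ?_⟩
  have hφ : φ (e ⟨f, hf⟩) = f p := by simp [φ]
  rw [← hφ, ← WeakDual.CharacterSpace.equivAlgHom_symm_coe φ, ← hq]
  rfl

theorem mem_of_bijective_restrictAlgHom [CompactSpace S] [T2Space S] (hA : A.SeparatesPoints)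
    (hρ : Function.Bijective (A.restrictAlgHom S)) (p : X) : p ∈ S := by
  obtain ⟨q, hqS, hq⟩ := exists_mem_eval_eq_of_bijective_restrictAlgHom hρ p
  by_contra hpS
  have hqp : q ≠ p := fun h => hpS (h ▸ hqS)
  obtain ⟨_, ⟨f, hf, rfl⟩, hfqp⟩ := hA hqp
  exact hfqp (hq f hf)

theorem eq_top_of_surjective_restrictAlgHom_univ
    (h : Function.Surjective (A.restrictAlgHom univ)) : A = ⊤ := by
  refine eq_top_iff.mpr fun f _ => ?_
  obtain ⟨g, hg⟩ := h (f.restrict univ)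
  have hgf : (g : C(X, ℂ)) = f := by
    ext x
    simpa using DFunLike.congr_fun hg ⟨x, mem_univ x⟩
  exact hgf ▸ g.2

end Subalgebra

namespace IsBoundary

variable {X : Type*} [TopologicalSpace X] [CompactSpace X] {A : Subalgebra ℂ C(X, ℂ)} {H : Set X}

theorem eq_zero_of_eqOn_zero (hH : IsBoundary A H) {f : C(X, ℂ)} (hf : f ∈ A)
    (h0 : EqOn f 0 H) : f = 0 := by
  have hnorm : ‖f‖ ≤ 0 := by
    rw [← hH.2 f hf]
    refine Real.sSup_nonpos ?_
    rintro _ ⟨x, hx, rfl⟩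
    simp [h0 hx]
  exact norm_le_zero_iff.mp hnorm

theorem injective_restrictAlgHom (hH : IsBoundary A H) :
    Function.Injective (A.restrictAlgHom H) := by
  refine (injective_iff_map_eq_zero _).mpr fun f hf => Subtype.ext ?_
  refine hH.eq_zero_of_eqOn_zero f.2 fun x hx => ?_
  simpa using DFunLike.congr_fun hf ⟨x, hx⟩

end IsBoundary

theorem stmt7_general {X : Type*} [TopologicalSpace X] [CompactSpace X] [T2Space X]
    (A : Subalgebra ℂ C(X, ℂ)) (hA : A.SeparatesPoints)
    (hAne : A ≠ ⊤)
    (S : Set X) (hSb : IsBoundary A S) :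
    restrictSet A S ≠ Set.univ := by
  intro hres
  have : CompactSpace S := isCompact_iff_compactSpace.mp hSb.1.isCompact
  have hsurj : Function.Surjective (A.restrictAlgHom S) := by
    rw [← range_eq_univ, Subalgebra.range_restrictAlgHom, hres]
  have hS : S = univ := eq_univ_of_forall
    (Subalgebra.mem_of_bijective_restrictAlgHom hA ⟨hSb.injective_restrictAlgHom, hsurj⟩)
  subst hS
  exact hAne (Subalgebra.eq_top_of_surjective_restrictAlgHom_univ hsurj)

/-- If `A ≤ C(X, ℂ)` is a closed proper subalgebra separating points, and `S` is its
Šilov boundary (smallest closed boundary), then `A↾S ≠ C(S, ℂ)`. -/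
theorem stmt7 {X : Type*} [TopologicalSpace X] [CompactSpace X] [T2Space X]
    (A : Subalgebra ℂ C(X, ℂ)) (hA : A.SeparatesPoints)
    (hAcl : IsClosed (A : Set C(X, ℂ))) (hAne : A ≠ ⊤)
    (S : Set X) (hSb : IsBoundary A S) (hSmin : ∀ T : Set X, IsBoundary A T → S ⊆ T) :
    restrictSet A S ≠ Set.univ :=
  stmt7_general A hA hAne S hSb
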